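/- Let f,g: ℝⁿ × ℝᵐ → ℝ, with f lower-bounded, x ↦ ∇ₓf(x,y) G₁-Lipschitz for every y, y ↦ ∇_y f(x,y) G₂(x)-Lipschitz for every x, and step size α < 2/G₁. If there exists B > 0 such that β⟨∇_y f(x,y), ∇_y g(x,y)⟩ ≥ (G₂(x)β²/2)‖∇_y g(x,y)‖² + B‖∇_y f(x,y)‖² for all (x,y), then the alternating updates x_{t+1} = xₜ - α∇ₓf(xₜ,yₜ), y_{t+1} = yₜ - β∇_y g(x_{t+1},yₜ) satisfy ‖∇ₓf(xₜ,yₜ)‖ → 0 and ‖∇_y f(x_{t+1},yₜ)‖ → 0. -/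

import Mathlib

/-!
Both half-steps decrease `f`. By the descent lemma `f (a + v) ≤ f a + ⟪∇f a, v⟫ + L/2 ‖v‖²`,
the `x`-step lowers `f` by at least `(α - G₁α²/2) ‖∇ₓf‖²`, which is a positive multiple of
`‖∇ₓf‖²` because `α < 2/G₁`; for the `y`-step the alignment condition absorbs the quadratic
term and leaves a decrease of at least `B ‖∇_y f‖²`. Thus `f` along the iterates is antitone
and bounded below, hence convergent, and the per-step decreases tend to zero.
-/

open Filter Topology RealInnerProductSpace
open scoped Gradient

section Descent

variable {F : Type*} [NormedAddCommGroup F] [InnerProductSpace ℝ F] [CompleteSpace F]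
  {f : F → ℝ} {L : NNReal}

theorem Differentiable.apply_add_le_of_lipschitzWith_gradient (hf : Differentiable ℝ f)
    (hL : LipschitzWith L (∇ f)) (a v : F) :
    f (a + v) ≤ f a + ⟪∇ f a, v⟫ + L / 2 * ‖v‖ ^ 2 := by
  set φ : ℝ → ℝ := fun s => f (a + s • v) - s * ⟪∇ f a, v⟫ - s ^ 2 * (L / 2 * ‖v‖ ^ 2)
  have hline (s : ℝ) : HasDerivAt (fun s : ℝ => f (a + s • v)) ⟪∇ f (a + s • v), v⟫ s := by
    have hpath : HasDerivAt (fun s : ℝ => a + s • v) v s := by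
      simpa using ((hasDerivAt_id s).smul_const v).const_add a
    rw [inner_gradient_left]
    exact (hf _).hasFDerivAt.comp_hasDerivAt s hpath
  have hφ (s : ℝ) : HasDerivAt φ
      (⟪∇ f (a + s • v) - ∇ f a, v⟫ - s * (L * ‖v‖ ^ 2)) s := by
    refine (((hline s).sub ((hasDerivAt_id s).mul_const ⟪∇ f a, v⟫)).sub
      ((hasDerivAt_pow 2 s).mul_const (L / 2 * ‖v‖ ^ 2))).congr_deriv ?_
    rw [inner_sub_left]; simp only [one_mul]; ring
  have hgrowth {s : ℝ} (hs : 0 ≤ s) : ⟪∇ f (a + s • v) - ∇ f a, v⟫ ≤ s * (L * ‖v‖ ^ 2) :=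
    calc ⟪∇ f (a + s • v) - ∇ f a, v⟫
        ≤ ‖∇ f (a + s • v) - ∇ f a‖ * ‖v‖ := real_inner_le_norm _ _
      _ ≤ L * ‖(a + s • v) - a‖ * ‖v‖ := by gcongr; exact hL.norm_sub_le _ _
      _ = s * (L * ‖v‖ ^ 2) := by
        rw [add_sub_cancel_left, norm_smul, Real.norm_of_nonneg hs]; ring
  have hanti : AntitoneOn φ (Set.Ici 0) :=
    antitoneOn_of_hasDerivWithinAt_nonpos (convex_Ici 0)
      (fun s _ => (hφ s).continuousAt.continuousWithinAt)
      (fun s _ => (hφ s).hasDerivWithinAt)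
      (fun s hs => sub_nonpos.2 (hgrowth (interior_subset hs)))
  have h10 : φ 1 ≤ φ 0 := hanti Set.self_mem_Ici (Set.mem_Ici.2 zero_le_one) zero_le_one
  simp only [φ, one_smul, one_mul, one_pow, zero_smul, add_zero, zero_mul, ne_eq,
    OfNat.ofNat_ne_zero, not_false_eq_true, zero_pow, sub_zero] at h10
  linarith

theorem Differentiable.apply_sub_smul_le_of_lipschitzWith_gradient (hf : Differentiable ℝ f)
    (hL : LipschitzWith L (∇ f)) (a d : F) (η : ℝ) :
    f (a - η • d) ≤ f a - (η * ⟪∇ f a, d⟫ - L * η ^ 2 / 2 * ‖d‖ ^ 2) := by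
  have := hf.apply_add_le_of_lipschitzWith_gradient hL a (-(η • d))
  rw [← sub_eq_add_neg, inner_neg_right, real_inner_smul_right, norm_neg, norm_smul,
    Real.norm_eq_abs, mul_pow, sq_abs] at this
  linarith

theorem Differentiable.apply_sub_smul_gradient_le (hf : Differentiable ℝ f)
    (hL : LipschitzWith L (∇ f)) (a : F) (η : ℝ) :
    f (a - η • ∇ f a) ≤ f a - (η - L * η ^ 2 / 2) * ‖∇ f a‖ ^ 2 := by
  have := hf.apply_sub_smul_le_of_lipschitzWith_gradient hL a (∇ f a) η
  rwa [real_inner_self_eq_norm_sq, ← sub_mul] at this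

end Descent

theorem tendsto_zero_of_add_le_of_forall_le {u d : ℕ → ℝ} {c : ℝ} (hd : ∀ t, 0 ≤ d t)
    (hu : ∀ t, u (t + 1) + d t ≤ u t) (hc : ∀ t, c ≤ u t) :
    Tendsto d atTop (𝓝 0) := by
  have hlim := tendsto_atTop_ciInf (antitone_nat_of_succ_le fun t => by linarith [hu t, hd t])
    ⟨c, Set.forall_mem_range.2 hc⟩
  have hdiff : Tendsto (fun t => u t - u (t + 1)) atTop (𝓝 0) := by
    simpa using hlim.sub (hlim.comp (tendsto_add_atTop_nat 1))
  exact squeeze_zero hd (fun t => by linarith [hu t]) hdiff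

theorem tendsto_norm_zero_of_const_mul_sq {ι E : Type*} [SeminormedAddCommGroup E] {l : Filter ι}
    {v : ι → E} {c : ℝ} (hc : 0 < c) (h : Tendsto (fun t => c * ‖v t‖ ^ 2) l (𝓝 0)) :
    Tendsto (fun t => ‖v t‖) l (𝓝 0) := by
  have hsq : Tendsto (fun t => ‖v t‖ ^ 2) l (𝓝 0) := by
    simpa [hc.ne'] using h.const_mul c⁻¹
  simpa using hsq.sqrt

theorem stmt_9_general {n m : ℕ}
    (f g : EuclideanSpace ℝ (Fin n) → EuclideanSpace ℝ (Fin m) → ℝ)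
    (hbdd : ∃ c : ℝ, ∀ x y, c ≤ f x y)
    (G₁ : NNReal)
    (G₂ : EuclideanSpace ℝ (Fin n) → NNReal)
    (hdx : ∀ y, Differentiable ℝ (fun x => f x y))
    (hdy : ∀ x, Differentiable ℝ (fun y => f x y))
    (hlx : ∀ y, LipschitzWith G₁ (fun x => gradient (fun x' => f x' y) x))
    (hly : ∀ x, LipschitzWith (G₂ x) (fun y => gradient (fun y' => f x y') y))
    (α β : ℝ) (hα : 0 < α) (hα2 : α < 2 / (G₁ : ℝ))
    (B : ℝ) (hB : 0 < B)
    (hinner : ∀ x y,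
      β * ⟪gradient (fun y' => f x y') y, gradient (fun y' => g x y') y⟫
        ≥ ((G₂ x : ℝ) * β ^ 2 / 2) * ‖gradient (fun y' => g x y') y‖ ^ 2
          + B * ‖gradient (fun y' => f x y') y‖ ^ 2)
    (x : ℕ → EuclideanSpace ℝ (Fin n)) (y : ℕ → EuclideanSpace ℝ (Fin m))
    (hxupd : ∀ t, x (t + 1) = x t - α • gradient (fun x' => f x' (y t)) (x t))
    (hyupd : ∀ t, y (t + 1) = y t - β • gradient (fun y' => g (x (t + 1)) y') (y t)) :
    Tendsto (fun t => ‖gradient (fun x' => f x' (y t)) (x t)‖) atTop (nhds 0) ∧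
    Tendsto (fun t => ‖gradient (fun y' => f (x (t + 1)) y') (y t)‖) atTop (nhds 0) := by
  have hc₁ : 0 < α - G₁ * α ^ 2 / 2 := by
    have : G₁ * α < 2 := by
      rcases G₁.coe_nonneg.eq_or_lt with hG₁ | hG₁
      · simp [← hG₁]
      · rwa [lt_div_iff₀' hG₁] at hα2
    nlinarith [mul_pos hα (sub_pos.2 this)]
  have hxstep (t : ℕ) : f (x (t + 1)) (y t)
      + (α - G₁ * α ^ 2 / 2) * ‖gradient (fun x' => f x' (y t)) (x t)‖ ^ 2 ≤ f (x t) (y t) := by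
    have := (hdx (y t)).apply_sub_smul_gradient_le (hlx (y t)) (x t) α
    rw [hxupd]; linarith
  have hystep (t : ℕ) : f (x (t + 1)) (y (t + 1))
      + B * ‖gradient (fun y' => f (x (t + 1)) y') (y t)‖ ^ 2 ≤ f (x (t + 1)) (y t) := by
    have := (hdy (x (t + 1))).apply_sub_smul_le_of_lipschitzWith_gradient (hly (x (t + 1)))
      (y t) (gradient (fun y' => g (x (t + 1)) y') (y t)) β
    rw [hyupd]; linarith [hinner (x (t + 1)) (y t)]
  obtain ⟨c, hc⟩ := hbdd
  constructor
  · refine tendsto_norm_zero_of_const_mul_sq hc₁ <|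
      tendsto_zero_of_add_le_of_forall_le (u := fun t => f (x t) (y t))
        (fun t => by positivity) (fun t => ?_) (fun t => hc _ _)
    nlinarith [hxstep t, hystep t]
  · refine tendsto_norm_zero_of_const_mul_sq hB <|
      tendsto_zero_of_add_le_of_forall_le (u := fun t => f (x (t + 1)) (y t))
        (fun t => by positivity) (fun t => ?_) (fun t => hc _ _)
    nlinarith [hxstep (t + 1), hystep t]

theorem stmt_9 {n m : ℕ}
    (f g : EuclideanSpace ℝ (Fin n) → EuclideanSpace ℝ (Fin m) → ℝ)
    (hbdd : ∃ c : ℝ, ∀ x y, c ≤ f x y)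
    (G₁ : NNReal) (hG₁ : 0 < (G₁ : ℝ))
    (G₂ : EuclideanSpace ℝ (Fin n) → NNReal)
    (hdx : ∀ y, Differentiable ℝ (fun x => f x y))
    (hdy : ∀ x, Differentiable ℝ (fun y => f x y))
    (hlx : ∀ y, LipschitzWith G₁ (fun x => gradient (fun x' => f x' y) x))
    (hly : ∀ x, LipschitzWith (G₂ x) (fun y => gradient (fun y' => f x y') y))
    (α β : ℝ) (hα : 0 < α) (hα2 : α < 2 / (G₁ : ℝ)) (hβ : 0 < β)
    (B : ℝ) (hB : 0 < B)
    (hinner : ∀ x y,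
      β * ⟪gradient (fun y' => f x y') y, gradient (fun y' => g x y') y⟫
        ≥ ((G₂ x : ℝ) * β ^ 2 / 2) * ‖gradient (fun y' => g x y') y‖ ^ 2
          + B * ‖gradient (fun y' => f x y') y‖ ^ 2)
    (x : ℕ → EuclideanSpace ℝ (Fin n)) (y : ℕ → EuclideanSpace ℝ (Fin m))
    (hxupd : ∀ t, x (t + 1) = x t - α • gradient (fun x' => f x' (y t)) (x t))
    (hyupd : ∀ t, y (t + 1) = y t - β • gradient (fun y' => g (x (t + 1)) y') (y t)) :
    Tendsto (fun t => ‖gradient (fun x' => f x' (y t)) (x t)‖) atTop (nhds 0) ∧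
    Tendsto (fun t => ‖gradient (fun y' => f (x (t + 1)) y') (y t)‖) atTop (nhds 0) :=
  stmt_9_general f g hbdd G₁ G₂ hdx hdy hlx hly α β hα hα2 B hB hinner x y hxupd hyupd
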